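/- arXiv:2301.09129 — 4 statements merged into one kernel-verified Lean document; each statement's English description precedes it below -/
import Mathlib

section
/- Let g₀ be the 4×4 complex matrix with diagonal entries 1 and all off-diagonal entries −1. Then (a) g₀² = 4·I₄, so g₀ represents an involution of ℙ³(ℂ); and (b) for all a₁, a₂, a₃, h ∈ ℂ with a₁a₂a₃h ≠ 0 there exists an invertible matrix L ∈ GL(4, ℂ) such that for every x ∈ ℂ⁴ the two vectors g₀ · crem(L · x) and L · Φ_h(x) are linearly dependent over ℂ (i.e. Φ_h is projectively equivalent to the birational map g₀ ∘ crem₃). -/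
noncomputable section

/-- The standard Cremona transformation of `ℙ³` in homogeneous (polynomial) form:
`crem(x)ᵢ = ∏_{j ≠ i} xⱼ`. -/
def crem (x : Fin 4 → ℂ) : Fin 4 → ℂ :=
  ![x 1 * x 2 * x 3, x 0 * x 2 * x 3, x 0 * x 1 * x 3, x 0 * x 1 * x 2]

/-- The KHK discretisation of the Euler top, in homogeneous coordinates. -/
def PhiH (a₁ a₂ a₃ h : ℂ) (x : Fin 4 → ℂ) : Fin 4 → ℂ :=
  ![-(h ^ 2) * x 0 * (a₁ * a₂ * (x 2) ^ 2 + a₁ * a₃ * (x 1) ^ 2 - a₂ * a₃ * (x 0) ^ 2)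
      - 4 * a₁ * h * x 1 * x 2 * x 3 - 4 * x 0 * (x 3) ^ 2,
    -(h ^ 2) * x 1 * (a₁ * a₂ * (x 2) ^ 2 - a₁ * a₃ * (x 1) ^ 2 + a₂ * a₃ * (x 0) ^ 2)
      - 4 * a₂ * h * x 0 * x 2 * x 3 - 4 * x 1 * (x 3) ^ 2,
    h ^ 2 * x 2 * (a₁ * a₂ * (x 2) ^ 2 - a₁ * a₃ * (x 1) ^ 2 - a₂ * a₃ * (x 0) ^ 2)
      - 4 * a₃ * h * x 0 * x 1 * x 3 - 4 * x 2 * (x 3) ^ 2,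
    a₁ * a₂ * a₃ * h ^ 3 * x 0 * x 1 * x 2
      + h ^ 2 * x 3 * (a₁ * a₂ * (x 2) ^ 2 + a₁ * a₃ * (x 1) ^ 2 + a₂ * a₃ * (x 0) ^ 2)
      - 4 * (x 3) ^ 3]

/-- The matrix `g₀`: diagonal entries `1`, off-diagonal entries `-1`. -/
def g₀ : Matrix (Fin 4) (Fin 4) ℂ :=
  !![1, -1, -1, -1;
     -1, 1, -1, -1;
     -1, -1, 1, -1;
     -1, -1, -1, 1]
/-!
Choose square roots `sᵢ² = aᵢ`. The matrix `L = K · diag(h s₂ s₃, h s₁ s₃, h s₁ s₂, 2)`, where `K` is a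
`4 × 4` Hadamard matrix (`K Kᵀ = 4`), satisfies the polynomial identity `g₀ · crem(L x) = 2 · L · Φ_h(x)`,
and it is invertible as soon as `a₁ a₂ a₃ h ≠ 0`.
-/

open Matrix

theorem g₀_mul_self : g₀ * g₀ = (4 : ℂ) • (1 : Matrix (Fin 4) (Fin 4) ℂ) := by
  ext i j
  fin_cases i <;> fin_cases j <;>
    simp [g₀, mul_apply, Fin.sum_univ_four] <;> norm_num

def hadamard4 (R : Type*) [Ring R] : Matrix (Fin 4) (Fin 4) R :=
  !![1, 1, -1, 1;
     1, -1, 1, 1;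
     -1, 1, 1, 1;
     -1, -1, -1, 1]

theorem hadamard4_mul_transpose (R : Type*) [CommRing R] :
    hadamard4 R * (hadamard4 R)ᵀ = (4 : R) • 1 := by
  ext i j
  fin_cases i <;> fin_cases j <;>
    simp [hadamard4, mul_apply, Fin.sum_univ_four] <;> norm_num

theorem isUnit_hadamard4 {R : Type*} [CommRing R] (h4 : IsUnit (4 : R)) :
    IsUnit (hadamard4 R) := by
  rw [isUnit_iff_isUnit_det]
  refine isUnit_det_of_right_inverse (B := (↑h4.unit⁻¹ : R) • (hadamard4 R)ᵀ) ?_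
  rw [Matrix.mul_smul, hadamard4_mul_transpose, smul_smul, IsUnit.val_inv_mul, one_smul]

def eulerConjugator (s₁ s₂ s₃ h : ℂ) : Matrix (Fin 4) (Fin 4) ℂ :=
  hadamard4 ℂ * diagonal ![h * s₂ * s₃, h * s₁ * s₃, h * s₁ * s₂, 2]

theorem isUnit_eulerConjugator {s₁ s₂ s₃ h : ℂ} (hs : s₁ * s₂ * s₃ * h ≠ 0) :
    IsUnit (eulerConjugator s₁ s₂ s₃ h) := by
  refine (isUnit_hadamard4 (isUnit_iff_ne_zero.2 (by norm_num))).mul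
    (isUnit_diagonal.2 (Pi.isUnit_iff.2 ?_))
  simp only [ne_eq, mul_eq_zero, not_or] at hs
  intro i
  fin_cases i <;> simp [hs]

theorem g₀_mulVec_crem_eulerConjugator (s₁ s₂ s₃ h : ℂ) (x : Fin 4 → ℂ) :
    g₀ *ᵥ crem (eulerConjugator s₁ s₂ s₃ h *ᵥ x) =
      (2 : ℂ) • (eulerConjugator s₁ s₂ s₃ h *ᵥ PhiH (s₁ ^ 2) (s₂ ^ 2) (s₃ ^ 2) h x) := by
  simp only [eulerConjugator, ← mulVec_mulVec]
  ext i
  fin_cases i <;>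
    simp [-mulVec_mulVec, hadamard4, crem, PhiH, g₀, mulVec, dotProduct, Fin.sum_univ_four] <;>
    ring

/-- `g₀` is an involution of `ℙ³` and the KHK discretisation of the Euler top is
projectively equivalent to the map `g₀ ∘ crem₃`. -/
theorem euler_projectively_equivalent :
    g₀ * g₀ = (4 : ℂ) • (1 : Matrix (Fin 4) (Fin 4) ℂ) ∧
    ∀ a₁ a₂ a₃ h : ℂ, a₁ * a₂ * a₃ * h ≠ 0 →
      ∃ L : Matrix (Fin 4) (Fin 4) ℂ, IsUnit L ∧
        ∀ x : Fin 4 → ℂ, ∃ c d : ℂ, (c ≠ 0 ∨ d ≠ 0) ∧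
          c • g₀.mulVec (crem (L.mulVec x)) + d • L.mulVec (PhiH a₁ a₂ a₃ h x) = 0 := by
  refine ⟨g₀_mul_self, fun a₁ a₂ a₃ h hne => ?_⟩
  obtain ⟨s₁, rfl⟩ := IsAlgClosed.exists_pow_nat_eq a₁ two_pos
  obtain ⟨s₂, rfl⟩ := IsAlgClosed.exists_pow_nat_eq a₂ two_pos
  obtain ⟨s₃, rfl⟩ := IsAlgClosed.exists_pow_nat_eq a₃ two_pos
  have hs : s₁ * s₂ * s₃ * h ≠ 0 := by
    contrapose! hne
    linear_combination s₁ * s₂ * s₃ * hne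
  refine ⟨eulerConjugator s₁ s₂ s₃ h, isUnit_eulerConjugator hs,
    fun x => ⟨1, -2, Or.inl one_ne_zero, ?_⟩⟩
  rw [g₀_mulVec_crem_eulerConjugator]
  module
end
end

section
/- Among the elements g of the Cremona-cubes group C = {g ∈ PGL₄(ℂ) : g·R ⊆ R}, exactly 192 satisfy g·E ⊆ E (these are the elements of type (B), represented by permutation matrices with signs). Concretely: the number of classes, modulo nonzero scalar matrices, of matrices M ∈ GL(4, ℂ) which map each of the twelve lines ℂ·v, v a representative vector of R, onto such a line, and which in addition map each coordinate line ℂ·eᵢ onto a coordinate line, is 192. -/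
/-- The twelve representative vectors of the Reye configuration `R = E ∪ P ∪ Q`. -/
def ReyeVecs : List (Fin 4 → ℂ) :=
  [![1, 0, 0, 0], ![0, 1, 0, 0], ![0, 0, 1, 0], ![0, 0, 0, 1],
   ![1, -1, -1, -1], ![-1, 1, -1, -1], ![-1, -1, 1, -1], ![-1, -1, -1, 1],
   ![1, -1, -1, 1], ![-1, 1, -1, 1], ![1, 1, -1, -1], ![1, 1, 1, 1]]

/-- An invertible matrix representing an element of the Cremona-cubes group of type (B):
it maps each of the twelve Reye lines to such a line, and in addition maps each
coordinate line to a coordinate line. -/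
def IsTypeB (M : Matrix (Fin 4) (Fin 4) ℂ) : Prop :=
  IsUnit M ∧ (∀ v ∈ ReyeVecs, ∃ w ∈ ReyeVecs, ∃ c : ℂ, c ≠ 0 ∧ M.mulVec v = c • w) ∧
    ∀ i : Fin 4, ∃ j : Fin 4, ∃ c : ℂ, c ≠ 0 ∧
      M.mulVec (Pi.single i 1) = c • (Pi.single j 1 : Fin 4 → ℂ)

/-!
A matrix sending every coordinate line to a coordinate line is monomial: its `j`-th column is
`c j • e (σ j)`. It sends `(1, 1, 1, 1)` to `(c (σ⁻¹ i))ᵢ`, which has no zero entry and is a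
multiple of a Reye vector, hence of a sign vector; so up to a scalar the matrix is a signed
permutation matrix. Conversely every signed permutation matrix permutes the twelve lines, because
the eight vectors of `P ∪ Q` represent all sixteen sign vectors up to sign. The `4! · 2⁴` signed
permutation matrices fall into scalar classes `{M, -M}`, so there are `192` classes; normalising
the sign of the first column picks one representative in each.
-/

open Matrix Equiv

section Monomial

variable {n R : Type*} [DecidableEq n]

def monomialMatrix [Zero R] (σ : Perm n) (c : n → R) : Matrix n n R :=
  of fun i j => if σ j = i then c j else 0

@[simp]
lemma monomialMatrix_apply [Zero R] (σ : Perm n) (c : n → R) (i j : n) :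
    monomialMatrix σ c i j = if σ j = i then c j else 0 := rfl

lemma monomialMatrix_mulVec_apply [Fintype n] [NonUnitalNonAssocSemiring R] (σ : Perm n)
    (c v : n → R) (i : n) : (monomialMatrix σ c *ᵥ v) i = c (σ.symm i) * v (σ.symm i) := by
  simp [mulVec, dotProduct, ite_mul, ← Equiv.eq_symm_apply]

lemma monomialMatrix_mulVec_single_one [Fintype n] [NonAssocSemiring R] (σ : Perm n)
    (c : n → R) (j : n) : monomialMatrix σ c *ᵥ Pi.single j 1 = c j • Pi.single (σ j) 1 := by
  ext i
  simp [Pi.single_apply, eq_comm]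

lemma smul_monomialMatrix [MulZeroClass R] (k : R) (σ : Perm n) (c : n → R) :
    k • monomialMatrix σ c = monomialMatrix σ (k • c) := by
  ext i j
  simp

lemma det_monomialMatrix [Fintype n] [CommRing R] (σ : Perm n) (c : n → R) :
    (monomialMatrix σ c).det = Perm.sign σ * ∏ j, c j := by
  have h : monomialMatrix σ c = (diagonal c).submatrix σ.symm id := by
    ext i j
    simp only [submatrix_apply, diagonal_apply, id, monomialMatrix_apply, Equiv.symm_apply_eq]
    grind
  rw [h, det_permute, det_diagonal, Perm.sign_symm]

lemma eq_of_monomialMatrix_eq [Zero R] {σ τ : Perm n} {c d : n → R} (hd : ∀ j, d j ≠ 0)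
    (h : monomialMatrix σ c = monomialMatrix τ d) : σ = τ ∧ c = d := by
  have key : ∀ j, σ j = τ j ∧ c j = d j := by
    intro j
    have hj := congrFun (congrFun h (τ j)) j
    simp only [monomialMatrix_apply, if_true] at hj
    split_ifs at hj with hστ
    · exact ⟨hστ, hj⟩
    · exact absurd hj.symm (hd j)
  exact ⟨Equiv.ext fun j => (key j).1, funext fun j => (key j).2⟩

lemma exists_eq_monomialMatrix [Fintype n] [Field R] {M : Matrix n n R} (hM : IsUnit M)
    (h : ∀ i, ∃ j, ∃ c : R, c ≠ 0 ∧ M *ᵥ Pi.single i 1 = c • Pi.single j 1) :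
    ∃ σ : Perm n, ∃ c : n → R, (∀ j, c j ≠ 0) ∧ M = monomialMatrix σ c := by
  choose f c hc hcol using h
  have hf : Function.Injective f := by
    intro i₁ i₂ hf
    have hsingle : c i₂ • Pi.single i₁ 1 = c i₁ • (Pi.single i₂ 1 : n → R) :=
      mulVec_injective_iff_isUnit.2 hM <| by
        rw [mulVec_smul, mulVec_smul, hcol, hcol, hf, smul_comm]
    by_contra hne
    simpa [Pi.single_apply, hne, hc] using congrFun hsingle i₁
  refine ⟨Equiv.ofBijective f (Finite.injective_iff_bijective.1 hf), c, hc,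
    ext_of_mulVec_single fun j => ?_⟩
  rw [hcol, monomialMatrix_mulVec_single_one]
  rfl

end Monomial

section Signs

variable {n : Type*} (R : Type*) [Ring R]

def signVec (s : n → ℤˣ) : n → R := fun i => ((s i : ℤ) : R)

variable {R}

lemma exists_signVec_eq {w : n → R} (hw : ∀ i, w i = 1 ∨ w i = -1) :
    ∃ s : n → ℤˣ, w = signVec R s := by
  have hunit : ∀ i, ∃ u : ℤˣ, ((u : ℤ) : R) = w i := fun i =>
    (hw i).elim (fun h => ⟨1, by simp [h]⟩) (fun h => ⟨-1, by simp [h]⟩)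
  choose s hs using hunit
  exact ⟨s, funext fun i => (hs i).symm⟩

lemma signVec_injective [CharZero R] : Function.Injective (signVec (n := n) R) := fun _ _ h =>
  funext fun i => Units.val_injective (Int.cast_injective (congrFun h i))

variable [DecidableEq n]

variable (R) in
def signedPerm (σ : Perm n) (ε : n → ℤˣ) : Matrix n n R :=
  monomialMatrix σ (signVec R ε)

lemma signedPerm_mulVec_signVec [Fintype n] (σ : Perm n) (ε s : n → ℤˣ) :
    signedPerm R σ ε *ᵥ signVec R s = signVec R ((ε * s) ∘ σ.symm) := by
  ext i
  simp [signedPerm, monomialMatrix_mulVec_apply, signVec]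

lemma signedPerm_eq_smul_cons {m : ℕ} (σ : Perm (Fin (m + 1))) (ε : Fin (m + 1) → ℤˣ) :
    signedPerm R σ ε =
      ((ε 0 : ℤ) : R) • signedPerm R σ (Fin.cons 1 fun i => ε 0 * ε i.succ) := by
  rw [signedPerm, signedPerm, smul_monomialMatrix]
  congr 1
  ext j
  cases j using Fin.cases <;> simp [signVec, ← mul_assoc, ← Int.cast_mul, ← Units.val_mul]

lemma eq_of_signedPerm_cons_eq_smul [CharZero R] {m : ℕ} {σ τ : Perm (Fin (m + 1))}
    {δ η : Fin m → ℤˣ} {c : R}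
    (h : signedPerm R σ (Fin.cons 1 δ) = c • signedPerm R τ (Fin.cons 1 η)) :
    σ = τ ∧ δ = η := by
  rw [signedPerm, signedPerm, smul_monomialMatrix] at h
  obtain ⟨hτσ, hsign⟩ := eq_of_monomialMatrix_eq (by simp [signVec]) h.symm
  have hc : c = 1 := by simpa [signVec] using congrFun hsign 0
  rw [hc, one_smul] at hsign
  exact ⟨hτσ.symm, (Fin.cons_right_injective _ (signVec_injective hsign)).symm⟩

end Signs

lemma mem_reyeVecs_cases {w : Fin 4 → ℂ} (hw : w ∈ ReyeVecs) :
    (∃ j, w = Pi.single j 1) ∨ ∀ i, w i = 1 ∨ w i = -1 := by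
  simp only [ReyeVecs, List.mem_cons, List.not_mem_nil, or_false] at hw
  rcases hw with rfl | rfl | rfl | rfl | rfl | rfl | rfl | rfl | rfl | rfl | rfl | rfl
  · exact Or.inl ⟨0, by ext i; fin_cases i <;> simp⟩
  · exact Or.inl ⟨1, by ext i; fin_cases i <;> simp⟩
  · exact Or.inl ⟨2, by ext i; fin_cases i <;> simp⟩
  · exact Or.inl ⟨3, by ext i; fin_cases i <;> simp⟩
  all_goals exact Or.inr fun i => by fin_cases i <;> norm_num

lemma single_mem_reyeVecs (j : Fin 4) : (Pi.single j 1 : Fin 4 → ℂ) ∈ ReyeVecs := by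
  fin_cases j <;> simp [ReyeVecs, funext_iff, Fin.forall_fin_succ, Pi.single_apply]

lemma one_mem_reyeVecs : (1 : Fin 4 → ℂ) ∈ ReyeVecs := by
  have h : (1 : Fin 4 → ℂ) = ![1, 1, 1, 1] := by ext i; fin_cases i <;> rfl
  simp [h, ReyeVecs]

lemma signVec_mem_or_neg_mem_reyeVecs (s : Fin 4 → ℤˣ) :
    signVec ℂ s ∈ ReyeVecs ∨ -signVec ℂ s ∈ ReyeVecs := by
  obtain ⟨a, b, c, d, rfl⟩ : ∃ a b c d, s = ![a, b, c, d] :=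
    ⟨s 0, s 1, s 2, s 3, by ext i; fin_cases i <;> rfl⟩
  have h : signVec ℂ ![a, b, c, d] = ![((a : ℤ) : ℂ), (b : ℤ), (c : ℤ), (d : ℤ)] := by
    ext i; fin_cases i <;> rfl
  rw [h]
  rcases Int.units_eq_one_or a with rfl | rfl <;> rcases Int.units_eq_one_or b with rfl | rfl <;>
    rcases Int.units_eq_one_or c with rfl | rfl <;> rcases Int.units_eq_one_or d with rfl | rfl <;>
    norm_num [ReyeVecs]

lemma exists_mem_reyeVecs_signVec_eq_smul (s : Fin 4 → ℤˣ) :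
    ∃ w ∈ ReyeVecs, ∃ c : ℂ, c ≠ 0 ∧ signVec ℂ s = c • w := by
  rcases signVec_mem_or_neg_mem_reyeVecs s with h | h
  · exact ⟨_, h, 1, one_ne_zero, (one_smul ℂ _).symm⟩
  · exact ⟨_, h, -1, by norm_num, by rw [neg_one_smul, neg_neg]⟩

lemma isTypeB_signedPerm (σ : Perm (Fin 4)) (ε : Fin 4 → ℤˣ) : IsTypeB (signedPerm ℂ σ ε) := by
  have hne : ∀ j, signVec ℂ ε j ≠ 0 := by simp [signVec]
  have hsingle : ∀ j, signedPerm ℂ σ ε *ᵥ Pi.single j 1 = signVec ℂ ε j • Pi.single (σ j) 1 :=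
    monomialMatrix_mulVec_single_one σ _
  refine ⟨?_, fun v hv => ?_, fun j => ⟨σ j, _, hne j, hsingle j⟩⟩
  · rw [isUnit_iff_isUnit_det, signedPerm, det_monomialMatrix]
    simp [signVec, Finset.prod_ne_zero_iff]
  · rcases mem_reyeVecs_cases hv with ⟨j, rfl⟩ | hpm
    · exact ⟨_, single_mem_reyeVecs (σ j), _, hne j, hsingle j⟩
    · obtain ⟨s, rfl⟩ := exists_signVec_eq hpm
      rw [signedPerm_mulVec_signVec]
      exact exists_mem_reyeVecs_signVec_eq_smul _

lemma IsTypeB.exists_eq_smul_signedPerm {M : Matrix (Fin 4) (Fin 4) ℂ} (hM : IsTypeB M) :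
    ∃ σ ε, ∃ k : ℂ, k ≠ 0 ∧ M = k • signedPerm ℂ σ ε := by
  obtain ⟨hunit, hreye, hcoord⟩ := hM
  obtain ⟨σ, c, hc, rfl⟩ := exists_eq_monomialMatrix hunit hcoord
  obtain ⟨w, hw, k, hk, hkw⟩ := hreye 1 one_mem_reyeVecs
  have hcw : ∀ j, c j = k * w (σ j) := fun j => by
    simpa [monomialMatrix_mulVec_apply] using congrFun hkw (σ j)
  have hw0 : ∀ i, w i ≠ 0 := fun i hi => hc (σ.symm i) (by simp [hcw, hi])
  have hpm : ∀ i, w i = 1 ∨ w i = -1 := (mem_reyeVecs_cases hw).resolve_left <| by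
    rintro ⟨j, rfl⟩
    exact hw0 (j + 1) (by fin_cases j <;> simp)
  obtain ⟨s, rfl⟩ := exists_signVec_eq hpm
  refine ⟨σ, s ∘ σ, k, hk, ?_⟩
  rw [signedPerm, smul_monomialMatrix]
  congr 1
  ext j
  simp [hcw, signVec]

lemma equivalence_exists_smul {G V : Type*} [GroupWithZero G] [MulAction G V] (P : V → Prop) :
    Equivalence fun x y : {v // P v} => ∃ c : G, c ≠ 0 ∧ (y : V) = c • (x : V) where
  refl x := ⟨1, one_ne_zero, (one_smul G _).symm⟩
  symm := by
    rintro x y ⟨c, hc, h⟩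
    exact ⟨c⁻¹, inv_ne_zero hc, by rw [h, smul_smul, inv_mul_cancel₀ hc, one_smul]⟩
  trans := by
    rintro x y z ⟨c, hc, h⟩ ⟨d, hd, h'⟩
    exact ⟨d * c, mul_ne_zero hd hc, by rw [h', h, smul_smul]⟩

/-- Exactly 192 elements of the Cremona-cubes group satisfy `g·E ⊆ E` (the elements of
type (B), represented by permutation matrices with signs): the classes, modulo nonzero
scalars, of such matrices form a set of cardinality 192. -/
theorem cremonaCubes_typeB_card :
    Nat.card (Quot (fun (M N : {M : Matrix (Fin 4) (Fin 4) ℂ // IsTypeB M}) =>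
      ∃ c : ℂ, c ≠ 0 ∧ (N : Matrix (Fin 4) (Fin 4) ℂ) = c • (M : Matrix (Fin 4) (Fin 4) ℂ)))
      = 192 := by
  have hr := equivalence_exists_smul (G := ℂ) IsTypeB
  refine (Nat.card_eq_of_bijective
    (fun p : Perm (Fin 4) × (Fin 3 → ℤˣ) => Quot.mk _
      (⟨signedPerm ℂ p.1 (Fin.cons 1 p.2), isTypeB_signedPerm _ _⟩ : {M // IsTypeB M}))
    ?_).symm.trans ?_
  · refine ⟨fun p q hpq => ?_, ?_⟩
    · obtain ⟨c, -, h⟩ := (hr.quot_mk_eq_iff _ _).1 hpq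
      obtain ⟨h₁, h₂⟩ := eq_of_signedPerm_cons_eq_smul h
      exact Prod.ext h₁.symm h₂.symm
    · rintro ⟨M, hM⟩
      obtain ⟨σ, ε, k, hk, rfl⟩ := hM.exists_eq_smul_signedPerm
      refine ⟨(σ, fun i => ε 0 * ε i.succ), Quot.sound ⟨k * ε 0, mul_ne_zero hk (by simp), ?_⟩⟩
      change k • signedPerm ℂ σ ε = _
      rw [signedPerm_eq_smul_cons σ ε, smul_smul]
  · rw [Nat.card_eq_fintype_card]
    simp [Fintype.card_perm, Fintype.card_units_int, Nat.factorial]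
end

section
/- Let σ₁, σ₂ be permutations of Fin 4. Let M be the free ℤ-module with basis H, E₁,…,E₄, P₁,…,P₄, and let f : M → M be the ℤ-linear map defined on the basis by f(H) = 3H − 2(P₁+P₂+P₃+P₄), f(Eᵢ) = H − Σ_{j ≠ i} P_{σ₁(j)} for each i, and f(Pᵢ) = E_{σ₂(i)} for each i. Then for every natural number n, fⁿ(H) = (2n² + 1)·H − n(n−1)·(E₁+E₂+E₃+E₄) − n(n+1)·(P₁+P₂+P₃+P₄). In particular the degree sequence of the map Φ = g∘crem₃ for g of type (A) is dₙ = 2n² + 1, so Φ is integrable according to the algebraic entropy. -/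
/-! On the span of `H`, `E = E₁+⋯+E₄`, `P = P₁+⋯+P₄` the map acts by `H ↦ 3H − 2P`,
`E ↦ 4H − 3P`, `P ↦ E`, since σ₁ and σ₂ only permute the summands of `E` and `P`. This 3×3 matrix
is unipotent with a single Jordan block, so the coefficients of `fⁿ(H)` are quadratic in `n`, and
the closed form is checked by induction. -/

noncomputable section

/-- Index type for the basis `H, E₁,…,E₄, P₁,…,P₄`. -/
abbrev IdxA := Unit ⊕ Fin 4 ⊕ Fin 4

/-- The free ℤ-module with basis `H, E₁,…,E₄, P₁,…,P₄`. -/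
abbrev ModA := IdxA → ℤ

/-- The basis vector `H` (pullback of the hyperplane class). -/
def Hc : ModA := Pi.single (Sum.inl ()) 1

/-- The basis vectors `Eᵢ` (exceptional divisors over the coordinate points). -/
def Ec (i : Fin 4) : ModA := Pi.single (Sum.inr (Sum.inl i)) 1

/-- The basis vectors `Pᵢ` (exceptional divisors over the points `pᵢ`). -/
def Pc (i : Fin 4) : ModA := Pi.single (Sum.inr (Sum.inr i)) 1

theorem Module.End.pow_apply_eq_of_typeA_relations {M : Type*} [AddCommGroup M] (f : Module.End ℤ M) {h e p : M}
    (hh : f h = 3 • h - 2 • p) (he : f e = 4 • h - 3 • p) (hp : f p = e) (n : ℕ) :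
    (f ^ n) h = (2 * (n : ℤ) ^ 2 + 1) • h - ((n : ℤ) * ((n : ℤ) - 1)) • e
      - ((n : ℤ) * ((n : ℤ) + 1)) • p := by
  induction n with
  | zero => simp
  | succ n ih =>
    rw [pow_succ', Module.End.mul_apply, ih, map_sub, map_sub, map_zsmul, map_zsmul, map_zsmul,
      hh, he, hp]
    push_cast
    module

theorem Finset.sum_sum_filter_ne {ι M : Type*} [Fintype ι] [DecidableEq ι] [AddCommGroup M]
    (v : ι → M) :
    ∑ i, ∑ j ∈ univ.filter (· ≠ i), v j = (Fintype.card ι - 1 : ℤ) • ∑ j, v j := by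
  simp_rw [filter_ne', sum_erase_eq_sub (mem_univ _), sum_sub_distrib, sum_const, card_univ]
  rw [sub_smul, one_smul, natCast_zsmul]

/-- The action on cohomology of a map `Φ = g∘crem₃` with `g` of type (A): for every `n`,
`fⁿ(H) = (2n²+1)H − n(n−1)(E₁+⋯+E₄) − n(n+1)(P₁+⋯+P₄)`; in particular the degree
sequence is `dₙ = 2n²+1` and `Φ` is integrable according to the algebraic entropy. -/
theorem typeA_degree_growth (σ₁ σ₂ : Equiv.Perm (Fin 4)) (f : Module.End ℤ ModA)
    (hH : f Hc = 3 • Hc - 2 • ∑ j : Fin 4, Pc j)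
    (hE : ∀ i : Fin 4, f (Ec i) = Hc - ∑ j ∈ Finset.univ.filter (· ≠ i), Pc (σ₁ j))
    (hP : ∀ i : Fin 4, f (Pc i) = Ec (σ₂ i)) :
    ∀ n : ℕ, (f ^ n) Hc =
      (2 * (n : ℤ) ^ 2 + 1) • Hc - ((n : ℤ) * ((n : ℤ) - 1)) • ∑ j : Fin 4, Ec j
        - ((n : ℤ) * ((n : ℤ) + 1)) • ∑ j : Fin 4, Pc j := by
  have hSP : f (∑ j, Pc j) = ∑ j, Ec j := by
    simp_rw [map_sum, hP]
    exact Equiv.sum_comp σ₂ Ec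
  have hSE : f (∑ j, Ec j) = 4 • Hc - 3 • ∑ j, Pc j := by
    simp_rw [map_sum, hE, Finset.sum_sub_distrib, Finset.sum_sum_filter_ne, Equiv.sum_comp σ₁ Pc,
      Finset.sum_const, Finset.card_univ, Fintype.card_fin]
    module
  exact Module.End.pow_apply_eq_of_typeA_relations f hH hSE hSP
end
end

section
/- Let A be a symmetric 4×4 complex matrix such that vᵀAv = 0 for each of the twelve vectors e₁, e₂, e₃, e₄, p₁, p₂, p₃, p₄, q₁, q₂, q₃, q₄. Then A = 0. Equivalently, no nonzero quadric of ℙ³(ℂ) passes through all twelve points of the Reye configuration R; in particular, for a map Φ = g∘crem₃ with g of type (C) there is no positive-dimensional covariant linear system of quadrics. -/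
/-!
Write `Q v = vᵀ A v`. The vectors `eᵢ` force the diagonal of `A` to vanish. For `i ≠ j`
and any `u`, polarization and the parallelogram law give
`8 Aᵢⱼ = Q(u + eᵢ + eⱼ) + Q(u - eᵢ - eⱼ) - Q(u + eᵢ - eⱼ) - Q(u - eᵢ + eⱼ)`;
taking for `u` the indicator of the complement of `{i, j}`, all four arguments are `±1`-vectors.
Up to sign there are exactly eight `±1`-vectors in `ℂ⁴`, namely the `pₖ` and `qₖ`, and
`Q(-v) = Q v`, so `Aᵢⱼ = 0` as well.
-/

open Matrix

namespace Matrix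

variable {n R : Type*} [Fintype n] [CommRing R] {A : Matrix n n R}

theorem IsSymm.dotProduct_mulVec_comm (hA : A.IsSymm) (x y : n → R) :
    x ⬝ᵥ A *ᵥ y = y ⬝ᵥ A *ᵥ x := by
  rw [dotProduct_mulVec, ← mulVec_transpose, hA.eq, dotProduct_comm]

theorem IsSymm.parallelogram (hA : A.IsSymm) (u x y : n → R) :
    (u + x + y) ⬝ᵥ A *ᵥ (u + x + y) + (u - x - y) ⬝ᵥ A *ᵥ (u - x - y)
      - (u + x - y) ⬝ᵥ A *ᵥ (u + x - y) - (u - x + y) ⬝ᵥ A *ᵥ (u - x + y)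
      = 8 * (x ⬝ᵥ A *ᵥ y) := by
  simp only [mulVec_add, mulVec_sub, add_dotProduct, sub_dotProduct, dotProduct_add,
    dotProduct_sub, hA.dotProduct_mulVec_comm y x, hA.dotProduct_mulVec_comm u x,
    hA.dotProduct_mulVec_comm u y]
  ring

variable [DecidableEq n]

theorem single_one_dotProduct_mulVec_single_one (i j : n) :
    Pi.single i 1 ⬝ᵥ A *ᵥ Pi.single j 1 = A i j := by
  simp

theorem IsSymm.eq_zero_of_forall_sign_dotProduct_mulVec_eq_zero [NoZeroDivisors R]
    [NeZero (2 : R)] (hA : A.IsSymm)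
    (hbasis : ∀ i, Pi.single i 1 ⬝ᵥ A *ᵥ Pi.single i 1 = 0)
    (hsign : ∀ v : n → R, (∀ k, v k = 1 ∨ v k = -1) → v ⬝ᵥ A *ᵥ v = 0) : A = 0 := by
  ext i j
  rw [zero_apply, ← single_one_dotProduct_mulVec_single_one (A := A)]
  obtain rfl | hij := eq_or_ne i j
  · exact hbasis i
  set u : n → R := fun k => if k = i ∨ k = j then 0 else 1
  have hu_sign : ∀ a b : R, (a = 1 ∨ a = -1) → (b = 1 ∨ b = -1) →
      ∀ k, (u + Pi.single i a + Pi.single j b : n → R) k = 1 ∨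
        (u + Pi.single i a + Pi.single j b : n → R) k = -1 := by
    intro a b ha hb k
    by_cases hki : k = i
    · subst hki; simp [u, hij, ha]
    by_cases hkj : k = j
    · subst hkj; simp [u, hki, hb]
    simp [u, hki, hkj]
  have h8 : (8 : R) ≠ 0 := by
    rw [show (8 : R) = 2 * 2 * 2 by norm_num]
    exact mul_ne_zero (mul_ne_zero two_ne_zero two_ne_zero) two_ne_zero
  refine (mul_eq_zero.mp ?_).resolve_left h8
  rw [← hA.parallelogram u, sub_eq_add_neg u, sub_eq_add_neg _ (Pi.single j 1),
    sub_eq_add_neg _ (Pi.single j 1), ← Pi.single_neg, ← Pi.single_neg]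
  simp only [hsign _ (hu_sign _ _ (.inl rfl) (.inl rfl)),
    hsign _ (hu_sign _ _ (.inl rfl) (.inr rfl)), hsign _ (hu_sign _ _ (.inr rfl) (.inl rfl)),
    hsign _ (hu_sign _ _ (.inr rfl) (.inr rfl))]
  ring

end Matrix

theorem single_mem_ReyeVecs (i : Fin 4) : Pi.single i 1 ∈ ReyeVecs := by
  fin_cases i <;> simp [ReyeVecs, funext_iff, Fin.forall_fin_succ]

theorem mem_ReyeVecs_or_neg_mem_of_sign (v : Fin 4 → ℂ) (hv : ∀ k, v k = 1 ∨ v k = -1) :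
    v ∈ ReyeVecs ∨ -v ∈ ReyeVecs := by
  rw [show v = ![v 0, v 1, v 2, v 3] by ext k; fin_cases k <;> rfl]
  rcases hv 0 with h0 | h0 <;> rcases hv 1 with h1 | h1 <;> rcases hv 2 with h2 | h2 <;>
    rcases hv 3 with h3 | h3 <;> simp [ReyeVecs, h0, h1, h2, h3]

/-- No nonzero quadric of `ℙ³(ℂ)` passes through all twelve points of the Reye
configuration: a symmetric 4×4 matrix whose quadratic form vanishes on all twelve
representative vectors is zero. -/
theorem no_quadric_through_Reye (A : Matrix (Fin 4) (Fin 4) ℂ) (hA : A.IsSymm)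
    (hv : ∀ v ∈ ReyeVecs, v ⬝ᵥ A.mulVec v = 0) :
    A = 0 := by
  refine hA.eq_zero_of_forall_sign_dotProduct_mulVec_eq_zero
    (fun i => hv _ (single_mem_ReyeVecs i)) fun v hsign => ?_
  rcases mem_ReyeVecs_or_neg_mem_of_sign v hsign with hmem | hmem
  · exact hv v hmem
  · simpa only [mulVec_neg, neg_dotProduct, dotProduct_neg, neg_neg] using hv (-v) hmem
end
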